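/- Let L be a split δ Jordan-Lie algebra with symmetric root system Λ, and let U be a vector space complement of span{[L_α, L_{-α}] : α ∈ Λ} in H. Then L = U + Σ_{[α]∈Λ/~} I_{[α]}, where each I_{[α]} = L_{Λ_α} is an ideal of L, and [I_{[α]}, I_{[β]}] = 0 whenever [α] ≠ [β]. -/

import Mathlib

/-- A δ Jordan-Lie algebra: a vector space with a bilinear bracket satisfying
`[x,y] = -δ[y,x]` and `[x,[y,z]] = δ[[x,y],z] + δ[y,[x,z]]` with `δ = ±1`. -/
structure DeltaJordanLie (K L : Type*) [Field K] [AddCommGroup L] [Module K L] where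
  br : L →ₗ[K] L →ₗ[K] L
  delta : K
  delta_pm : delta = 1 ∨ delta = -1
  anti : ∀ x y : L, br x y = -(delta • br y x)
  jacobi : ∀ x y z : L, br x (br y z) = delta • br (br x y) z + delta • br y (br x z)

variable {K L : Type*} [Field K] [AddCommGroup L] [Module K L]

/-- The root space `L_α = {v ∈ L : [h,v] = α(h)v for all h ∈ H}`. -/
def DeltaJordanLie.rootSpace (J : DeltaJordanLie K L) (H : Submodule K L)
    (α : Module.Dual K H) : Submodule K L where
  carrier := {v : L | ∀ h : H, J.br (h : L) v = α h • v}
  zero_mem' := by intro h; simp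
  add_mem' := by intro a b ha hb h; simp [ha h, hb h, smul_add]
  smul_mem' := by intro c a ha h; rw [map_smul, ha h, smul_comm]

/-- The root system `Λ = {α ∈ H* \ {0} : L_α ≠ 0}`. -/
def DeltaJordanLie.roots (J : DeltaJordanLie K L) (H : Submodule K L) :
    Set (Module.Dual K H) :=
  {α | α ≠ 0 ∧ J.rootSpace H α ≠ ⊥}

/-- `H` is a splitting Cartan subalgebra: a maximal abelian subalgebra such that
`L` decomposes as the direct sum of the simultaneous eigenspaces `L_α`, with `L_0 = H`. -/
structure DeltaJordanLie.IsSplitting (J : DeltaJordanLie K L) (H : Submodule K L) : Prop where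
  abelian : ∀ x ∈ H, ∀ y ∈ H, J.br x y = 0
  maximal : ∀ H' : Submodule K L, H ≤ H' →
      (∀ x ∈ H', ∀ y ∈ H', J.br x y = 0) → H' = H
  zero_rootSpace : J.rootSpace H 0 = H
  indep : iSupIndep (fun α : Module.Dual K H => J.rootSpace H α)
  decomp : (⨆ α : Module.Dual K H, J.rootSpace H α) = ⊤

/-- The root system is symmetric. -/
def DeltaJordanLie.SymmetricRoots (J : DeltaJordanLie K L) (H : Submodule K L) : Prop :=
  ∀ α ∈ J.roots H, -α ∈ J.roots H

/-- The δ-twisted partial sums of a sequence of roots: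
`s₀ = f 0`, `s_{k+1} = δ • (s_k + f (k+1))`, so that
`s_k = δ^k f 0 + δ^k f 1 + δ^{k-1} f 2 + ⋯ + δ f k`. -/
def connSum {H : Submodule K L} (d : K) (f : ℕ → Module.Dual K H) : ℕ → Module.Dual K H
  | 0 => f 0
  | k + 1 => d • (connSum d f k + f (k + 1))

/-- `f 0, …, f n` is a connection from `α` to `β`: all terms are roots, `f 0 = α`,
all proper δ-twisted partial sums are roots, and the final sum is `±β`. -/
def IsConnection (J : DeltaJordanLie K L) (H : Submodule K L)
    (α β : Module.Dual K H) (n : ℕ) (f : ℕ → Module.Dual K H) : Prop :=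
  (∀ i ≤ n, f i ∈ J.roots H) ∧ f 0 = α ∧
  (∀ k < n, connSum J.delta f k ∈ J.roots H) ∧
  (connSum J.delta f n = β ∨ connSum J.delta f n = -β)

/-- `α` and `β` are connected. -/
def Connected (J : DeltaJordanLie K L) (H : Submodule K L)
    (α β : Module.Dual K H) : Prop :=
  ∃ n f, IsConnection J H α β n f

/-- `Λ_α`: the set of nonzero roots connected to `α`. -/
def connectedRoots (J : DeltaJordanLie K L) (H : Submodule K L)
    (α : Module.Dual K H) : Set (Module.Dual K H) :=
  {β ∈ J.roots H | Connected J H α β}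

/-- An ideal of a δ Jordan-Lie algebra: a submodule with `[I,L] ⊆ I` and `[L,I] ⊆ I`. -/
def IsIdeal (J : DeltaJordanLie K L) (I : Submodule K L) : Prop :=
  ∀ x ∈ I, ∀ y : L, J.br x y ∈ I ∧ J.br y x ∈ I

/-- `H_S = span{[L_β, L_{-β}] : β ∈ S}`. -/
def rootSpan (J : DeltaJordanLie K L) (H : Submodule K L)
    (S : Set (Module.Dual K H)) : Submodule K L :=
  Submodule.span K {z : L | ∃ β ∈ S, ∃ x ∈ J.rootSpace H β, ∃ y ∈ J.rootSpace H (-β),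
    z = J.br x y}

/-- `L_S = H_S ⊕ V_S`, the subalgebra associated to a set of roots `S`. -/
def decIdeal (J : DeltaJordanLie K L) (H : Submodule K L)
    (S : Set (Module.Dual K H)) : Submodule K L :=
  rootSpan J H S ⊔ ⨆ β ∈ S, J.rootSpace H β

/-!
The bracket of root vectors `x ∈ L_β`, `y ∈ L_γ` lies in `L_{δ(β+γ)}`. So it vanishes unless
`γ = -β`, in which case it lies in `H_{[β]}`, or `δ(β+γ)` is a root, which is then connected both
to `β` and to `γ`. As connection is an equivalence relation (connections can be concatenated and
reversed), root spaces of different classes commute, and the Jacobi identity then shows that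
`[L_β, L_{-β}]` kills every root space outside `[β]`. This gives both the ideal property and the
vanishing of brackets between different classes; the sum decomposition is immediate from
`L = H ⊕ ⨁ L_α` and `H = U + H_Λ`.
-/

namespace DeltaJordanLie

variable {J : DeltaJordanLie K L} {H : Submodule K L}

theorem delta_mul_self (J : DeltaJordanLie K L) : J.delta * J.delta = 1 := by
  rcases J.delta_pm with h | h <;> simp [h]

theorem delta_ne_zero (J : DeltaJordanLie K L) : J.delta ≠ 0 :=
  left_ne_zero_of_mul_eq_one J.delta_mul_self

theorem smul_mem_roots (hsym : J.SymmetricRoots H) {c : K} (hc : c * c = 1)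
    {α : Module.Dual K H} (hα : α ∈ J.roots H) : c • α ∈ J.roots H := by
  rcases mul_self_eq_one_iff.mp hc with rfl | rfl
  · rwa [one_smul]
  · rw [neg_one_smul K α]
    exact hsym α hα

theorem br_mem_rootSpace {α β : Module.Dual K H} {x y : L}
    (hx : x ∈ J.rootSpace H α) (hy : y ∈ J.rootSpace H β) :
    J.br x y ∈ J.rootSpace H (J.delta • (α + β)) := by
  intro h
  rw [J.jacobi (h : L) x y, hx h, hy h]
  simp only [map_smul, LinearMap.smul_apply, LinearMap.add_apply, smul_smul, ← add_smul,
    smul_eq_mul]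
  congr 1
  ring

theorem eq_zero_or_mem_roots_or_rootSpace_eq_bot (J : DeltaJordanLie K L) (H : Submodule K L)
    (γ : Module.Dual K H) : γ = 0 ∨ γ ∈ J.roots H ∨ J.rootSpace H γ = ⊥ := by
  by_cases h0 : γ = 0
  · exact Or.inl h0
  by_cases hb : J.rootSpace H γ = ⊥
  · exact Or.inr (Or.inr hb)
  · exact Or.inr (Or.inl ⟨h0, hb⟩)

theorem IsSplitting.sup_iSup_rootSpace_eq_top (hs : J.IsSplitting H) :
    H ⊔ ⨆ γ ∈ J.roots H, J.rootSpace H γ = ⊤ := by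
  rw [eq_top_iff, ← hs.decomp]
  refine iSup_le fun γ => ?_
  rcases eq_zero_or_mem_roots_or_rootSpace_eq_bot J H γ with rfl | hγ | hγ
  · rw [hs.zero_rootSpace]
    exact le_sup_left
  · exact le_sup_of_le_right (le_iSup₂ (f := fun γ _ => J.rootSpace H γ) γ hγ)
  · rw [hγ]
    exact bot_le

theorem IsSplitting.rootSpan_le (hs : J.IsSplitting H) (S : Set (Module.Dual K H)) :
    rootSpan J H S ≤ H := by
  rw [rootSpan, Submodule.span_le]
  rintro _ ⟨β, -, x, hx, y, hy, rfl⟩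
  have h := br_mem_rootSpace hx hy
  rwa [add_neg_cancel, smul_zero, hs.zero_rootSpace] at h

end DeltaJordanLie

open DeltaJordanLie

section Connection

variable {J : DeltaJordanLie K L} {H : Submodule K L}

theorem exists_sign_of_eq_or_eq_neg {V : Type*} [AddCommGroup V] [Module K V] {v w : V}
    (h : w = v ∨ w = -v) : ∃ c : K, c * c = 1 ∧ w = c • v := by
  rcases h with rfl | rfl
  · exact ⟨1, one_mul 1, (one_smul K w).symm⟩
  · exact ⟨-1, by norm_num, (neg_one_smul K v).symm⟩

theorem smul_eq_or_eq_neg_of_mul_self_eq_one {V : Type*} [AddCommGroup V] [Module K V] {c : K}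
    (hc : c * c = 1) (v : V) : c • v = v ∨ c • v = -v := by
  rcases mul_self_eq_one_iff.mp hc with rfl | rfl
  · exact Or.inl (one_smul K v)
  · exact Or.inr (neg_one_smul K v)

theorem connSum_congr {d : K} {f g : ℕ → Module.Dual K H} {k : ℕ} (h : ∀ i ≤ k, f i = g i) :
    connSum d f k = connSum d g k := by
  induction k with
  | zero => exact h 0 le_rfl
  | succ k ih => rw [connSum, connSum, ih fun i hi => h i (by omega), h (k + 1) le_rfl]

theorem connSum_append {d c : K} {f g : ℕ → Module.Dual K H} {n : ℕ}
    (h : connSum d f n = c • g 0) (j : ℕ) :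
    connSum d (fun i => if i ≤ n then f i else c • g (i - n)) (n + j) = c • connSum d g j := by
  induction j with
  | zero => exact (connSum_congr fun i hi => if_pos hi).trans h
  | succ j ih =>
    rw [← add_assoc, connSum, ih, if_neg (by omega), show n + j + 1 - n = j + 1 by omega,
      connSum, ← smul_add, smul_comm]

/-- Reversal of a connection ending in `c • β`: starting from `β` and adding the terms
`-(c δ) • f n, …, -(c δ) • f 1` retraces the partial sums `c • s_n, …, c • s_0`. -/
theorem connSum_reverse {d c : K} (hd : d * d = 1) (hc : c * c = 1) {f : ℕ → Module.Dual K H}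
    {n : ℕ} {β : Module.Dual K H} (h : connSum d f n = c • β) {k : ℕ} (hk : k ≤ n) :
    connSum d (fun i => if i = 0 then β else (-(c * d)) • f (n - i + 1)) k =
      c • connSum d f (n - k) := by
  induction k with
  | zero => rw [Nat.sub_zero, h, smul_smul, hc, one_smul]; rfl
  | succ k ih =>
    obtain ⟨j, hj⟩ : ∃ j, n - k = j + 1 := ⟨n - k - 1, by omega⟩
    rw [connSum, ih (by omega), if_neg k.succ_ne_zero, show n - (k + 1) + 1 = j + 1 by omega,
      show n - (k + 1) = j by omega, hj, connSum]
    linear_combination (norm := module) hd • (c • connSum d f j)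

theorem connected_refl {α : Module.Dual K H} (hα : α ∈ J.roots H) : Connected J H α α :=
  ⟨0, fun _ => α, fun _ _ => hα, rfl, fun _ hk => absurd hk (Nat.not_lt_zero _), Or.inl rfl⟩

theorem connected_delta_smul_add {β γ : Module.Dual K H} (hβ : β ∈ J.roots H)
    (hγ : γ ∈ J.roots H) : Connected J H β (J.delta • (β + γ)) := by
  refine ⟨1, fun i => if i = 0 then β else γ, fun i _ => ?_, rfl, fun k hk => ?_, Or.inl rfl⟩
  · dsimp only
    split_ifs
    exacts [hβ, hγ]
  · obtain rfl : k = 0 := by omega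
    exact hβ

namespace Connected

variable {α β γ : Module.Dual K H}

theorem neg_right (h : Connected J H α β) : Connected J H α (-β) := by
  obtain ⟨n, f, hf_roots, hf0, hf_sums, hf_end⟩ := h
  exact ⟨n, f, hf_roots, hf0, hf_sums, hf_end.symm.imp id fun h => by rw [h, neg_neg]⟩

theorem trans (hsym : J.SymmetricRoots H) (hαβ : Connected J H α β)
    (hβγ : Connected J H β γ) : Connected J H α γ := by
  obtain ⟨n, f, hf_roots, hf0, hf_sums, hf_end⟩ := hαβ
  obtain ⟨m, g, hg_roots, hg0, hg_sums, hg_end⟩ := hβγ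
  obtain ⟨c, hc, hfn⟩ := exists_sign_of_eq_or_eq_neg (K := K) hf_end
  obtain ⟨c', hc', hgm⟩ := exists_sign_of_eq_or_eq_neg (K := K) hg_end
  have hsums := connSum_append (d := J.delta) (hg0 ▸ hfn)
  refine ⟨n + m, fun i => if i ≤ n then f i else c • g (i - n), fun i hi => ?_,
    (if_pos n.zero_le).trans hf0, fun k hk => ?_, ?_⟩
  · dsimp only
    split_ifs with hin
    · exact hf_roots i hin
    · exact smul_mem_roots hsym hc (hg_roots _ (by omega))
  · rcases lt_or_ge k n with hkn | hnk
    · rw [connSum_congr fun i hi => if_pos (by omega : i ≤ n)]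
      exact hf_sums k hkn
    · obtain ⟨j, rfl⟩ := Nat.exists_eq_add_of_le hnk
      rw [hsums]
      exact smul_mem_roots hsym hc (hg_sums j (by omega))
  · rw [hsums, hgm, smul_smul]
    exact smul_eq_or_eq_neg_of_mul_self_eq_one (by rw [mul_mul_mul_comm, hc, hc', one_mul]) γ

theorem symm (hsym : J.SymmetricRoots H) (hβ : β ∈ J.roots H) (h : Connected J H α β) :
    Connected J H β α := by
  obtain ⟨n, f, hf_roots, hf0, hf_sums, hf_end⟩ := h
  obtain ⟨c, hc, hfn⟩ := exists_sign_of_eq_or_eq_neg (K := K) hf_end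
  have hsign : -(c * J.delta) * -(c * J.delta) = 1 := by
    rw [neg_mul_neg, mul_mul_mul_comm, hc, J.delta_mul_self, one_mul]
  have hsums {k : ℕ} (hk : k ≤ n) := connSum_reverse J.delta_mul_self hc hfn hk
  refine ⟨n, fun i => if i = 0 then β else (-(c * J.delta)) • f (n - i + 1), fun i hi => ?_,
    if_pos rfl, fun k hk => ?_, ?_⟩
  · dsimp only
    split_ifs
    · exact hβ
    · exact smul_mem_roots hsym hsign (hf_roots _ (by omega))
  · rw [hsums hk.le]
    rcases Nat.eq_zero_or_pos k with rfl | hk0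
    · rwa [Nat.sub_zero, hfn, smul_smul, hc, one_smul]
    · exact smul_mem_roots hsym hc (hf_sums _ (by omega))
  · rw [hsums le_rfl, Nat.sub_self, show connSum J.delta f 0 = α from hf0]
    exact smul_eq_or_eq_neg_of_mul_self_eq_one hc α

end Connected

theorem not_connected_of_connected (hsym : J.SymmetricRoots H) {α β γ : Module.Dual K H}
    (hαβ : ¬ Connected J H α β) (hγ : γ ∈ J.roots H) (hβγ : Connected J H β γ) :
    ¬ Connected J H α γ :=
  fun hαγ => hαβ (hαγ.trans hsym (hβγ.symm hsym hγ))

end Connection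

section Ideals

variable {J : DeltaJordanLie K L} {H : Submodule K L}

theorem self_mem_connectedRoots {α : Module.Dual K H} (hα : α ∈ J.roots H) :
    α ∈ connectedRoots J H α :=
  ⟨hα, connected_refl hα⟩

theorem rootSpan_le_decIdeal (S : Set (Module.Dual K H)) : rootSpan J H S ≤ decIdeal J H S :=
  le_sup_left

theorem rootSpace_le_decIdeal {S : Set (Module.Dual K H)} {β : Module.Dual K H} (hβ : β ∈ S) :
    J.rootSpace H β ≤ decIdeal J H S :=
  (le_iSup₂ (f := fun β _ => J.rootSpace H β) β hβ).trans le_sup_right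

theorem br_eq_zero_of_not_connected (hsym : J.SymmetricRoots H) {β γ : Module.Dual K H}
    (hβ : β ∈ J.roots H) (hγ : γ ∈ J.roots H) (hβγ : ¬ Connected J H β γ) {x y : L}
    (hx : x ∈ J.rootSpace H β) (hy : y ∈ J.rootSpace H γ) : J.br x y = 0 := by
  have hxy := br_mem_rootSpace hx hy
  rcases eq_zero_or_mem_roots_or_rootSpace_eq_bot J H (J.delta • (β + γ)) with h0 | hroot | hbot
  · rw [smul_eq_zero_iff_right J.delta_ne_zero, add_eq_zero_iff_eq_neg'] at h0
    exact absurd (h0 ▸ (connected_refl hβ).neg_right) hβγ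
  · have hγ' : Connected J H γ (J.delta • (β + γ)) :=
      add_comm γ β ▸ connected_delta_smul_add hγ hβ
    exact absurd ((connected_delta_smul_add hβ hγ).trans hsym (hγ'.symm hsym hroot)) hβγ
  · rwa [hbot, Submodule.mem_bot] at hxy

theorem br_eq_zero_of_mem_rootSpan (hsym : J.SymmetricRoots H) {α γ : Module.Dual K H}
    (hγ : γ ∈ J.roots H) (hαγ : ¬ Connected J H α γ) {z v : L}
    (hz : z ∈ rootSpan J H (connectedRoots J H α)) (hv : v ∈ J.rootSpace H γ) :
    J.br z v = 0 := by
  suffices rootSpan J H (connectedRoots J H α) ≤ LinearMap.ker (J.br.flip v) from this hz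
  rw [rootSpan, Submodule.span_le]
  rintro _ ⟨β, ⟨hβ, hαβ⟩, x, hx, y, hy, rfl⟩
  have hxv : J.br x v = 0 :=
    br_eq_zero_of_not_connected hsym hβ hγ (fun h => hαγ (hαβ.trans hsym h)) hx hv
  have hyv : J.br y v = 0 :=
    br_eq_zero_of_not_connected hsym (hsym β hβ) hγ (fun h => hαγ (hαβ.neg_right.trans hsym h))
      hy hv
  have hj := J.jacobi x y v
  rw [hxv, hyv, map_zero, map_zero, smul_zero, add_zero, eq_comm,
    smul_eq_zero_iff_right J.delta_ne_zero] at hj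
  exact hj

theorem isIdeal_of_map₂_le {I : Submodule K L} (h : Submodule.map₂ J.br I ⊤ ≤ I) :
    IsIdeal J I := by
  intro x hx y
  have hxy : J.br x y ∈ I := Submodule.map₂_le.mp h x hx y Submodule.mem_top
  exact ⟨hxy, J.anti y x ▸ I.neg_mem (I.smul_mem _ hxy)⟩

theorem isIdeal_decIdeal_connectedRoots (hs : J.IsSplitting H) (hsym : J.SymmetricRoots H)
    (α : Module.Dual K H) : IsIdeal J (decIdeal J H (connectedRoots J H α)) := by
  apply isIdeal_of_map₂_le
  rw [← hs.sup_iSup_rootSpace_eq_top]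
  conv_lhs => rw [decIdeal]
  simp only [Submodule.map₂_sup_left, Submodule.map₂_sup_right, Submodule.map₂_iSup_left,
    Submodule.map₂_iSup_right, sup_le_iff, iSup_le_iff, Submodule.map₂_le]
  set I := decIdeal J H (connectedRoots J H α)
  refine ⟨⟨fun z hz h hh => ?_, fun β hβ x hx h hh => ?_⟩,
    fun γ hγ => ⟨fun z hz w hw => ?_, fun β hβ x hx w hw => ?_⟩⟩
  · rw [hs.abelian z (hs.rootSpan_le _ hz) h hh]
    exact I.zero_mem
  · rw [J.anti x h, hx ⟨h, hh⟩]
    exact I.neg_mem (I.smul_mem _ (I.smul_mem _ (rootSpace_le_decIdeal hβ hx)))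
  · by_cases hαγ : Connected J H α γ
    · rw [hw ⟨z, hs.rootSpan_le _ hz⟩]
      exact I.smul_mem _ (rootSpace_le_decIdeal (S := connectedRoots J H α) ⟨hγ, hαγ⟩ hw)
    · rw [br_eq_zero_of_mem_rootSpan hsym hγ hαγ hz hw]
      exact I.zero_mem
  · have hxw := br_mem_rootSpace hx hw
    rcases eq_zero_or_mem_roots_or_rootSpace_eq_bot J H (J.delta • (β + γ)) with
      h0 | hroot | hbot
    · rw [smul_eq_zero_iff_right J.delta_ne_zero, add_eq_zero_iff_eq_neg'] at h0
      exact rootSpan_le_decIdeal _ (Submodule.subset_span ⟨β, hβ, x, hx, w, h0 ▸ hw, rfl⟩)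
    · exact rootSpace_le_decIdeal (S := connectedRoots J H α)
        ⟨hroot, hβ.2.trans hsym (connected_delta_smul_add hβ.1 hγ)⟩ hxw
    · rw [hbot, Submodule.mem_bot] at hxw
      rw [hxw]
      exact I.zero_mem

theorem br_eq_zero_of_mem_decIdeal (hs : J.IsSplitting H) (hsym : J.SymmetricRoots H)
    {α β : Module.Dual K H} (hα : α ∈ J.roots H) (hαβ : ¬ Connected J H α β) {x y : L}
    (hx : x ∈ decIdeal J H (connectedRoots J H α))
    (hy : y ∈ decIdeal J H (connectedRoots J H β)) : J.br x y = 0 := by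
  suffices Submodule.map₂ J.br (decIdeal J H (connectedRoots J H α))
      (decIdeal J H (connectedRoots J H β)) ≤ ⊥ from
    (Submodule.mem_bot K).mp (Submodule.map₂_le.mp this x hx y hy)
  have hβα : ¬ Connected J H β α := fun h => hαβ (h.symm hsym hα)
  simp only [decIdeal, Submodule.map₂_sup_left, Submodule.map₂_sup_right,
    Submodule.map₂_iSup_left, Submodule.map₂_iSup_right, sup_le_iff, iSup_le_iff,
    Submodule.map₂_le, Submodule.mem_bot]
  refine ⟨⟨fun z hz z' hz' => ?_, fun γ hγ x hx z' hz' => ?_⟩,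
    fun ε hε => ⟨fun z hz w hw => ?_, fun γ hγ x hx w hw => ?_⟩⟩
  · exact hs.abelian z (hs.rootSpan_le _ hz) z' (hs.rootSpan_le _ hz')
  · rw [J.anti x z', br_eq_zero_of_mem_rootSpan hsym hγ.1
      (not_connected_of_connected hsym hβα hγ.1 hγ.2) hz' hx, smul_zero, neg_zero]
  · exact br_eq_zero_of_mem_rootSpan hsym hε.1
      (not_connected_of_connected hsym hαβ hε.1 hε.2) hz hw
  · exact br_eq_zero_of_not_connected hsym hγ.1 hε.1
      (fun h => not_connected_of_connected hsym hαβ hε.1 hε.2 (hγ.2.trans hsym h)) hx hw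

theorem sup_iSup_decIdeal_connectedRoots_eq_top (hs : J.IsSplitting H) {U : Submodule K L}
    (hU : U ⊔ rootSpan J H (J.roots H) = H) :
    U ⊔ (⨆ α ∈ J.roots H, decIdeal J H (connectedRoots J H α)) = ⊤ := by
  have hle {α : Module.Dual K H} (hα : α ∈ J.roots H) :
      decIdeal J H (connectedRoots J H α) ≤ ⨆ α ∈ J.roots H, decIdeal J H (connectedRoots J H α) :=
    le_iSup₂ (f := fun α _ => decIdeal J H (connectedRoots J H α)) α hα
  rw [eq_top_iff, ← hs.sup_iSup_rootSpace_eq_top]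
  refine sup_le (hU.ge.trans (sup_le le_sup_left ?_)) (iSup₂_le fun γ hγ => ?_)
  · rw [rootSpan, Submodule.span_le]
    rintro _ ⟨β, hβ, x, hx, y, hy, rfl⟩
    exact Submodule.mem_sup_right (hle hβ (rootSpan_le_decIdeal _
      (Submodule.subset_span ⟨β, self_mem_connectedRoots hβ, x, hx, y, hy, rfl⟩)))
  · exact le_sup_of_le_right ((rootSpace_le_decIdeal (self_mem_connectedRoots hγ)).trans
      (hle hγ))

end Ideals

theorem stmt9_general (J : DeltaJordanLie K L) (H : Submodule K L) (hs : J.IsSplitting H)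
    (hsym : J.SymmetricRoots H) (U : Submodule K L)
    (hUsup : U ⊔ rootSpan J H (J.roots H) = H) :
    U ⊔ (⨆ α ∈ J.roots H, decIdeal J H (connectedRoots J H α)) = ⊤ ∧
    (∀ α ∈ J.roots H, IsIdeal J (decIdeal J H (connectedRoots J H α))) ∧
    (∀ α ∈ J.roots H, ∀ β ∈ J.roots H, ¬ Connected J H α β →
      ∀ x ∈ decIdeal J H (connectedRoots J H α),
        ∀ y ∈ decIdeal J H (connectedRoots J H β), J.br x y = 0) :=
  ⟨sup_iSup_decIdeal_connectedRoots_eq_top hs hUsup,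
    fun α _ => isIdeal_decIdeal_connectedRoots hs hsym α,
    fun _ hα _ _ hαβ _ hx _ hy => br_eq_zero_of_mem_decIdeal hs hsym hα hαβ hx hy⟩

/-- `L = U + Σ_{[α]} I_{[α]}` where `U` is a complement of
`span{[L_α, L_{-α}] : α ∈ Λ}` in `H`, each `I_{[α]} = L_{Λ_α}` is an ideal, and
`[I_{[α]}, I_{[β]}] = 0` for distinct classes. -/
theorem stmt9 (J : DeltaJordanLie K L) (H : Submodule K L) (hs : J.IsSplitting H)
    (hsym : J.SymmetricRoots H) (U : Submodule K L) (hUH : U ≤ H)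
    (hUint : U ⊓ rootSpan J H (J.roots H) = ⊥)
    (hUsup : U ⊔ rootSpan J H (J.roots H) = H) :
    U ⊔ (⨆ α ∈ J.roots H, decIdeal J H (connectedRoots J H α)) = ⊤ ∧
    (∀ α ∈ J.roots H, IsIdeal J (decIdeal J H (connectedRoots J H α))) ∧
    (∀ α ∈ J.roots H, ∀ β ∈ J.roots H, ¬ Connected J H α β →
      ∀ x ∈ decIdeal J H (connectedRoots J H α),
        ∀ y ∈ decIdeal J H (connectedRoots J H β), J.br x y = 0) :=
  stmt9_general J H hs hsym U hUsup
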